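/- The 5-lobster (the tree obtained by subdividing every edge of the star K_{1,5}, i.e., a center vertex a adjacent to five vertices b, d, f, g, h, each of which has one additional pendant leaf) is not a midpoint unit veto interval graph. -/
import Mathlib


/-- A veto interval: a closed interval `[l, r]` with a veto mark `v`, `l < v < r`. -/
structure VetoInterval where
  l : ℝ
  v : ℝ
  r : ℝ
  hlv : l < v
  hvr : v < r

/-- Two veto intervals are adjacent iff they intersect and neither contains
the veto mark of the other. -/
def VIAdj (a b : VetoInterval) : Prop :=
  (a.v < b.l ∧ b.l < a.r ∧ a.r < b.v) ∨ (b.v < a.l ∧ a.l < b.r ∧ b.r < a.v)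

/-- `G` is a veto interval graph. -/
def IsVIGraph {V : Type*} (G : SimpleGraph V) : Prop :=
  ∃ f : V → VetoInterval, ∀ a b : V, G.Adj a b ↔ VIAdj (f a) (f b)

/-- `G` is a midpoint unit veto interval (MUVI) graph. -/
def IsMUVIGraph {V : Type*} (G : SimpleGraph V) : Prop :=
  ∃ f : V → VetoInterval,
    (∀ a b : V, G.Adj a b ↔ VIAdj (f a) (f b)) ∧
    (∀ a b : V, (f a).r - (f a).l = (f b).r - (f b).l) ∧
    (∀ a : V, (f a).v = ((f a).l + (f a).r) / 2)

/-- The 5-lobster: the star `K_{1,5}` with every edge subdivided.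
Vertex `0` is the center, vertices `1`–`5` are its neighbors, and vertex
`i + 5` is the pendant leaf attached to vertex `i` for `1 ≤ i ≤ 5`. -/
def fiveLobster : SimpleGraph (Fin 11) :=
  SimpleGraph.fromRel (fun i j =>
    ((i : ℕ) = 0 ∧ 1 ≤ (j : ℕ) ∧ (j : ℕ) ≤ 5) ∨
    ((j : ℕ) = (i : ℕ) + 5 ∧ 1 ≤ (i : ℕ) ∧ (i : ℕ) ≤ 5))

/-- Midpoint adjacency: centers at distance strictly between `L/2` and `L`. -/
def Amid (L u w : ℝ) : Prop :=
  (L / 2 < w - u ∧ w - u < L) ∨ (L / 2 < u - w ∧ u - w < L)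

lemma ordered_aux (L c x1 x2 x3 y2 : ℝ)
    (h1 : L / 2 < x1 - c) (h3 : x3 - c < L)
    (h12 : x1 ≤ x2) (h23 : x2 ≤ x3)
    (hy : Amid L x2 y2)
    (hn1 : ¬ Amid L x1 y2) (hn3 : ¬ Amid L x3 y2) : False := by
  unfold Amid at hy hn1 hn3
  push_neg at hn1 hn3
  rcases hy with ⟨hy1, hy2'⟩ | ⟨hy1, hy2'⟩
  · have hA : L ≤ y2 - x1 := (hn1.1) (by linarith)
    have hB : L ≤ y2 - x3 := (hn3.1) (by linarith)
    linarith
  · have hA : L ≤ x3 - y2 := (hn3.2) (by linarith)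
    have hB : L ≤ x1 - y2 := (hn1.2) (by linarith)
    linarith

lemma triple_pos (L c x1 x2 x3 y1 y2 y3 : ℝ)
    (b1 : L / 2 < x1 - c ∧ x1 - c < L)
    (b2 : L / 2 < x2 - c ∧ x2 - c < L)
    (b3 : L / 2 < x3 - c ∧ x3 - c < L)
    (a1 : Amid L x1 y1) (a2 : Amid L x2 y2) (a3 : Amid L x3 y3)
    (n12 : ¬ Amid L x2 y1) (n13 : ¬ Amid L x3 y1)
    (n21 : ¬ Amid L x1 y2) (n23 : ¬ Amid L x3 y2)
    (n31 : ¬ Amid L x1 y3) (n32 : ¬ Amid L x2 y3) : False := by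
  rcases le_total x1 x2 with h12 | h21
  · rcases le_total x2 x3 with h23 | h32
    · exact ordered_aux L c x1 x2 x3 y2 b1.1 b3.2 h12 h23 a2 n21 n23
    · rcases le_total x1 x3 with h13 | h31
      · exact ordered_aux L c x1 x3 x2 y3 b1.1 b2.2 h13 h32 a3 n31 n32
      · exact ordered_aux L c x3 x1 x2 y1 b3.1 b2.2 h31 h12 a1 n13 n12
  · rcases le_total x1 x3 with h13 | h31
    · exact ordered_aux L c x2 x1 x3 y1 b2.1 b3.2 h21 h13 a1 n12 n13
    · rcases le_total x2 x3 with h23 | h32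
      · exact ordered_aux L c x2 x3 x1 y3 b2.1 b1.2 h23 h31 a3 n32 n31
      · exact ordered_aux L c x3 x2 x1 y2 b3.1 b1.2 h32 h21 a2 n23 n21

lemma Amid_reflect_iff (L c x y : ℝ) :
    Amid L (2 * c - x) (2 * c - y) ↔ Amid L x y := by
  unfold Amid
  constructor <;>
    rintro (⟨h1, h2⟩ | ⟨h1, h2⟩) <;>
    first
      | exact Or.inl ⟨by linarith, by linarith⟩
      | exact Or.inr ⟨by linarith, by linarith⟩

lemma triple_neg (L c x1 x2 x3 y1 y2 y3 : ℝ)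
    (b1 : L / 2 < c - x1 ∧ c - x1 < L)
    (b2 : L / 2 < c - x2 ∧ c - x2 < L)
    (b3 : L / 2 < c - x3 ∧ c - x3 < L)
    (a1 : Amid L x1 y1) (a2 : Amid L x2 y2) (a3 : Amid L x3 y3)
    (n12 : ¬ Amid L x2 y1) (n13 : ¬ Amid L x3 y1)
    (n21 : ¬ Amid L x1 y2) (n23 : ¬ Amid L x3 y2)
    (n31 : ¬ Amid L x1 y3) (n32 : ¬ Amid L x2 y3) : False := by
  refine triple_pos L c (2*c - x1) (2*c - x2) (2*c - x3) (2*c - y1) (2*c - y2) (2*c - y3)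
    ⟨by linarith [b1.1], by linarith [b1.2]⟩
    ⟨by linarith [b2.1], by linarith [b2.2]⟩
    ⟨by linarith [b3.1], by linarith [b3.2]⟩
    ((Amid_reflect_iff L c x1 y1).mpr a1)
    ((Amid_reflect_iff L c x2 y2).mpr a2)
    ((Amid_reflect_iff L c x3 y3).mpr a3)
    (fun h => n12 ((Amid_reflect_iff L c x2 y1).mp h))
    (fun h => n13 ((Amid_reflect_iff L c x3 y1).mp h))
    (fun h => n21 ((Amid_reflect_iff L c x1 y2).mp h))
    (fun h => n23 ((Amid_reflect_iff L c x3 y2).mp h))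
    (fun h => n31 ((Amid_reflect_iff L c x1 y3).mp h))
    (fun h => n32 ((Amid_reflect_iff L c x2 y3).mp h))

lemma pigeon5 : ∀ s : Fin 5 → Bool, ∃ i j k : Fin 5,
    i ≠ j ∧ i ≠ k ∧ j ≠ k ∧ s i = s j ∧ s i = s k := by decide

/-- Neighbor vertex `i+1` of the center. -/
def nb (i : Fin 5) : Fin 11 := ⟨i.val + 1, by have := i.isLt; omega⟩

/-- Leaf vertex `i+6` attached to neighbor `i+1`. -/
def lf (i : Fin 5) : Fin 11 := ⟨i.val + 6, by have := i.isLt; omega⟩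

lemma adj_center (i : Fin 5) : fiveLobster.Adj 0 (nb i) := by
  have := i.isLt
  simp only [fiveLobster, SimpleGraph.fromRel_adj, nb, lf, ne_eq, Fin.ext_iff, Fin.val_mk,
    Fin.val_zero, true_and, and_true]
  omega

lemma adj_leaf (i : Fin 5) : fiveLobster.Adj (nb i) (lf i) := by
  have := i.isLt
  simp only [fiveLobster, SimpleGraph.fromRel_adj, nb, lf, ne_eq, Fin.ext_iff, Fin.val_mk, true_and, and_true]
  omega

lemma nonadj_leaf {i j : Fin 5} (h : i ≠ j) : ¬ fiveLobster.Adj (nb j) (lf i) := by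
  have hi := i.isLt
  have hj := j.isLt
  have hne : i.val ≠ j.val := fun hv => h (Fin.ext hv)
  simp only [fiveLobster, SimpleGraph.fromRel_adj, nb, lf, ne_eq, Fin.ext_iff, Fin.val_mk, true_and, and_true]
  omega

/-- The 5-lobster is not a MUVI graph. -/
theorem stmt_8 : ¬ IsMUVIGraph fiveLobster := by
  classical
  rintro ⟨f, hadj, hlen, hmid⟩
  set L : ℝ := (f 0).r - (f 0).l with hLdef
  have hL : 0 < L := by
    have h1 := (f 0).hlv
    have h2 := (f 0).hvr
    rw [hLdef]; linarith
  have hlr : ∀ a : Fin 11, (f a).l = (f a).v - L / 2 ∧ (f a).r = (f a).v + L / 2 := by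
    intro a
    have h1 := hlen a 0
    have h2 := hmid a
    constructor <;> (rw [hLdef]; linarith)
  have key : ∀ a b : Fin 11, fiveLobster.Adj a b ↔ Amid L (f a).v (f b).v := by
    intro a b
    rw [hadj]
    obtain ⟨la, ra⟩ := hlr a
    obtain ⟨lb, rb⟩ := hlr b
    unfold VIAdj Amid
    rw [la, ra, lb, rb]
    constructor
    · rintro (⟨h1, h2, h3⟩ | ⟨h1, h2, h3⟩)
      · exact Or.inl ⟨by linarith, by linarith⟩
      · exact Or.inr ⟨by linarith, by linarith⟩
    · rintro (⟨h1, h2⟩ | ⟨h1, h2⟩)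
      · exact Or.inl ⟨by linarith, by linarith, by linarith⟩
      · exact Or.inr ⟨by linarith, by linarith, by linarith⟩
  set c : ℝ := (f 0).v with hc
  -- side classification of each neighbor
  obtain ⟨i, j, k, hij, hik, hjk, e1, e2⟩ :=
    pigeon5 (fun i => decide (c < (f (nb i)).v))
  have side : ∀ m : Fin 5, decide (c < (f (nb m)).v) = true →
      L / 2 < (f (nb m)).v - c ∧ (f (nb m)).v - c < L := by
    intro m hm
    have hA := (key 0 (nb m)).mp (adj_center m)
    have hm' : c < (f (nb m)).v := of_decide_eq_true hm
    rcases hA with ⟨h1, h2⟩ | ⟨h1, h2⟩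
    · exact ⟨h1, h2⟩
    · exact absurd hm' (by linarith)
  have sideN : ∀ m : Fin 5, decide (c < (f (nb m)).v) = false →
      L / 2 < c - (f (nb m)).v ∧ c - (f (nb m)).v < L := by
    intro m hm
    have hA := (key 0 (nb m)).mp (adj_center m)
    have hm' : ¬ c < (f (nb m)).v := of_decide_eq_false hm
    rcases hA with ⟨h1, h2⟩ | ⟨h1, h2⟩
    · exact absurd (by linarith : c < (f (nb m)).v) hm'
    · exact ⟨h1, h2⟩
  have e1' : decide (c < (f (nb i)).v) = decide (c < (f (nb j)).v) := e1
  have e2' : decide (c < (f (nb i)).v) = decide (c < (f (nb k)).v) := e2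
  have ai : Amid L (f (nb i)).v (f (lf i)).v := (key _ _).mp (adj_leaf i)
  have aj : Amid L (f (nb j)).v (f (lf j)).v := (key _ _).mp (adj_leaf j)
  have ak : Amid L (f (nb k)).v (f (lf k)).v := (key _ _).mp (adj_leaf k)
  have nij : ¬ Amid L (f (nb j)).v (f (lf i)).v :=
    fun h => nonadj_leaf hij ((key _ _).mpr h)
  have nik : ¬ Amid L (f (nb k)).v (f (lf i)).v :=
    fun h => nonadj_leaf hik ((key _ _).mpr h)
  have nji : ¬ Amid L (f (nb i)).v (f (lf j)).v :=
    fun h => nonadj_leaf hij.symm ((key _ _).mpr h)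
  have njk : ¬ Amid L (f (nb k)).v (f (lf j)).v :=
    fun h => nonadj_leaf hjk ((key _ _).mpr h)
  have nki : ¬ Amid L (f (nb i)).v (f (lf k)).v :=
    fun h => nonadj_leaf hik.symm ((key _ _).mpr h)
  have nkj : ¬ Amid L (f (nb j)).v (f (lf k)).v :=
    fun h => nonadj_leaf hjk.symm ((key _ _).mpr h)
  cases hb : decide (c < (f (nb i)).v) with
  | true =>
    exact triple_pos L c (f (nb i)).v (f (nb j)).v (f (nb k)).v
      (f (lf i)).v (f (lf j)).v (f (lf k)).v
      (side i hb) (side j (e1' ▸ hb)) (side k (e2' ▸ hb))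
      ai aj ak nij nik nji njk nki nkj
  | false =>
    exact triple_neg L c (f (nb i)).v (f (nb j)).v (f (nb k)).v
      (f (lf i)).v (f (lf j)).v (f (lf k)).v
      (sideN i hb) (sideN j (e1' ▸ hb)) (sideN k (e2' ▸ hb))
      ai aj ak nij nik nji njk nki nkj
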